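/- The ℚ-linear functional φ on ℚ[χ₁,...,χ_n] defined on monomials by φ(χ^μ) = 1 if μ₁ = ... = μ_n = p(p+3)/2 for some p ∈ ℕ, and 0 otherwise, is not killed by any nonzero polynomial acting by shift: for every nonzero P ∈ ℚ[χ] there exists a monomial χ_ν such that φ(χ_ν · P) ≠ 0. -/

import Mathlib

/-!
Let `p` bound every exponent of `P`, put `d = p(p+3)/2`, and shift by `χ^ν` with `νᵢ = d - μ₀ᵢ`
for some `μ₀` in the support of `P`. Each shifted exponent `ν + μ` has all coordinates in
`[d - p, d + p]`, and since consecutive values of `q ↦ q(q+3)/2` near `p` differ by `p + 1` and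
`p + 2`, the only such value in that window is `d` itself. So `ν + μ` is a diagonal point of
the form `(q(q+3)/2, …)` exactly when `μ = μ₀`, and `φ(χ^ν P)` picks out the coefficient of `χ^μ₀`.
-/

open MvPolynomial

theorem two_mul_mul_add_three_div_two (q : ℕ) : 2 * (q * (q + 3) / 2) = q * (q + 3) :=
  Nat.two_mul_div_two_of_even <| by
    rcases Nat.even_or_odd q with h | h <;> simp [Nat.even_add, h, parity_simps]

theorem le_mul_add_three_div_two (p : ℕ) : p ≤ p * (p + 3) / 2 := by
  have := two_mul_mul_add_three_div_two p
  nlinarith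

theorem eq_of_mul_add_three_le_add_of_le_add {p q : ℕ} (hle : p * (p + 3) ≤ q * (q + 3) + 2 * p)
    (hge : q * (q + 3) ≤ p * (p + 3) + 2 * p) : q = p := by
  rcases lt_trichotomy q p with hlt | heq | hgt
  · nlinarith
  · exact heq
  · nlinarith

theorem eq_of_mul_add_three_div_two_sub_add_eq {p q a b : ℕ} (ha : a ≤ p) (hb : b ≤ p)
    (h : p * (p + 3) / 2 - a + b = q * (q + 3) / 2) : a = b := by
  have hp := two_mul_mul_add_three_div_two p
  have hq := two_mul_mul_add_three_div_two q
  have hpd := le_mul_add_three_div_two p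
  obtain rfl : q = p := eq_of_mul_add_three_le_add_of_le_add (by omega) (by omega)
  omega

theorem LinearMap.apply_monomial_mul_eq_coeff {σ R : Type*} [CommSemiring R]
    (φ : MvPolynomial σ R →ₗ[R] R) (ν μ₀ : σ →₀ ℕ) (P : MvPolynomial σ R)
    (h₀ : φ (monomial (ν + μ₀) 1) = 1)
    (h : ∀ μ ∈ P.support, μ ≠ μ₀ → φ (monomial (ν + μ) 1) = 0) :
    φ (monomial ν 1 * P) = P.coeff μ₀ := by
  have hterm : ∀ μ, φ (monomial ν 1 * monomial μ (P.coeff μ)) =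
      P.coeff μ * φ (monomial (ν + μ) 1) := fun μ => by
    rw [monomial_mul, one_mul, ← smul_eq_mul, ← map_smul, smul_monomial, smul_eq_mul, mul_one]
  conv_lhs => rw [P.as_sum]
  rw [Finset.mul_sum, map_sum, Finset.sum_congr rfl fun μ _ => hterm μ]
  rw [Finset.sum_eq_single μ₀ (fun μ hμ hne => by rw [h μ hμ hne, mul_zero])
    fun hμ₀ => by rw [notMem_support_iff.mp hμ₀, zero_mul], h₀, mul_one]

/-- The `ℚ`-linear functional `φ` on `ℚ[χ₁,...,χ_n]` whose value on
a monomial `χ^μ` is `1` if `μ₁ = ... = μ_n = p(p+3)/2` for some `p ∈ ℕ` and `0`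
otherwise is not killed by any nonzero polynomial under the shift action: for
every nonzero `P` there is a monomial `χ_ν` with `φ(χ_ν · P) ≠ 0`. -/
theorem functional_not_killed_by_shift
    {n : ℕ} (φ : MvPolynomial (Fin n) ℚ →ₗ[ℚ] ℚ)
    (hφ1 : ∀ (μ : Fin n →₀ ℕ) (p : ℕ),
      (∀ i, μ i = p * (p + 3) / 2) → φ (monomial μ (1 : ℚ)) = 1)
    (hφ0 : ∀ μ : Fin n →₀ ℕ,
      (¬ ∃ p : ℕ, ∀ i, μ i = p * (p + 3) / 2) → φ (monomial μ (1 : ℚ)) = 0)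
    (P : MvPolynomial (Fin n) ℚ) (hP : P ≠ 0) :
    ∃ ν : Fin n →₀ ℕ, φ (monomial ν (1 : ℚ) * P) ≠ 0 := by
  obtain ⟨μ₀, hμ₀⟩ := support_nonempty.mpr hP
  set p := P.totalDegree
  have hbound : ∀ μ ∈ P.support, ∀ i, μ i ≤ p := fun μ hμ i =>
    (Finsupp.le_degree i μ).trans (le_totalDegree hμ)
  let ν : Fin n →₀ ℕ := Finsupp.equivFunOnFinite.symm fun i => p * (p + 3) / 2 - μ₀ i
  refine ⟨ν, ?_⟩
  have hdiag : φ (monomial (ν + μ₀) 1) = 1 := hφ1 _ p fun i => by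
    have := hbound μ₀ hμ₀ i
    have := le_mul_add_three_div_two p
    simp only [Finsupp.add_apply, ν, Finsupp.coe_equivFunOnFinite_symm]
    omega
  have hoff : ∀ μ ∈ P.support, μ ≠ μ₀ → φ (monomial (ν + μ) 1) = 0 := fun μ hμ hne =>
    hφ0 _ fun ⟨q, hq⟩ => hne <| Finsupp.ext fun i =>
      (eq_of_mul_add_three_div_two_sub_add_eq (hbound μ₀ hμ₀ i) (hbound μ hμ i) (hq i)).symm
  rw [φ.apply_monomial_mul_eq_coeff ν μ₀ P hdiag hoff]
  exact mem_support_iff.mp hμ₀
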